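/- With notation as in the previous item but with an extra factor λ^{2ε} (ε > 0) in the integrand, i.e. F̃(σ,t) = c σ^{-(n-2)} ∫_0^∞ e^{itλ} λ^{1+2ε-(n+1)/2} η(λ) ((1-φ)𝒥)(σλ) dλ, one has the bound |F̃(σ,t)| ≤ C_ε σ^{-(n-1)/2} uniformly in σ ≥ 1 and t ∈ ℝ. -/

import Mathlib

/-!
The oscillating factor has modulus one, so it suffices to bound the absolute integral. Since
`|G(σλ)| ≤ C_G (σλ)^{(n-3)/2}`, the integrand is at most `C_η C_G σ^{(n-3)/2} λ^{2ε-1}` on the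
support `(0, c₂]` of `η`, and `∫_0^{c₂} λ^{2ε-1} dλ = c₂^{2ε}/(2ε)` is finite because `ε > 0`.
Together with the prefactor `σ^{-(n-2)}` this gives `σ^{-(n-1)/2}`.
-/

open MeasureTheory Real Set

theorem norm_oscillatory_integrand_le {p a σ t Cη CG l : ℝ} {η G : ℝ → ℂ}
    (hσ : 0 < σ) (hl : 0 < l) (hG : ∀ z : ℝ, 0 < z → ‖G z‖ ≤ CG * z ^ a)
    (hηb : ∀ l : ℝ, ‖η l‖ ≤ Cη) :
    ‖Complex.exp (Complex.I * t * l) * ((l ^ p : ℝ) : ℂ) * η l * G (σ * l)‖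
      ≤ Cη * CG * σ ^ a * l ^ (p + a) := by
  have hCη : 0 ≤ Cη := (norm_nonneg _).trans (hηb 0)
  have hexp : ‖Complex.exp (Complex.I * t * l)‖ = 1 := by
    simp [Complex.norm_exp, Complex.mul_re]
  calc ‖Complex.exp (Complex.I * t * l) * ((l ^ p : ℝ) : ℂ) * η l * G (σ * l)‖
      = l ^ p * (‖η l‖ * ‖G (σ * l)‖) := by
        rw [norm_mul, norm_mul, norm_mul, hexp, Complex.norm_real, Real.norm_of_nonneg
          (rpow_nonneg hl.le _)]
        ring
    _ ≤ l ^ p * (Cη * (CG * (σ * l) ^ a)) :=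
        mul_le_mul_of_nonneg_left
          (mul_le_mul (hηb l) (hG _ (mul_pos hσ hl)) (norm_nonneg _) hCη) (rpow_nonneg hl.le _)
    _ = Cη * CG * σ ^ a * l ^ (p + a) := by
        rw [mul_rpow hσ.le hl.le, rpow_add hl]
        ring

theorem norm_setIntegral_Ioi_le_of_eq_zero_of_lt {E : Type*} [NormedAddCommGroup E]
    [NormedSpace ℝ E] {f : ℝ → E} {g : ℝ → ℝ} {c : ℝ} (hc : 0 ≤ c)
    (hf : ∀ l, c < l → f l = 0) (hfg : ∀ l ∈ Ioc 0 c, ‖f l‖ ≤ g l)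
    (hg : IntervalIntegrable g volume 0 c) :
    ‖∫ l in Ioi 0, f l‖ ≤ ∫ l in 0..c, g l := by
  have hsupp : ∫ l in Ioi 0, f l = ∫ l in 0..c, f l := by
    rw [intervalIntegral.integral_of_le hc]
    refine setIntegral_eq_of_subset_of_forall_sdiff_eq_zero measurableSet_Ioi
      Ioc_subset_Ioi_self fun l ⟨hl0, hlc⟩ => hf l (lt_of_not_ge fun h => hlc ⟨hl0, h⟩)
  rw [hsupp]
  exact intervalIntegral.norm_integral_le_of_norm_le hc (ae_of_all _ hfg) hg

theorem integral_zero_rpow_sub_one {c s : ℝ} (hs : 0 < s) :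
    ∫ l in 0..c, l ^ (s - 1) = c ^ s / s := by
  rw [integral_rpow (Or.inl (by linarith)), sub_add_cancel, zero_rpow hs.ne', sub_zero]

theorem norm_integral_Ioi_oscillatory_le {p a σ t Cη CG c₂ : ℝ} {η G : ℝ → ℂ}
    (hpa : 0 < p + a + 1) (hσ : 0 < σ) (hc₂ : 0 ≤ c₂)
    (hG : ∀ z : ℝ, 0 < z → ‖G z‖ ≤ CG * z ^ a)
    (hηb : ∀ l : ℝ, ‖η l‖ ≤ Cη) (hηs : ∀ l : ℝ, l ∉ Ioc 0 c₂ → η l = 0) :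
    ‖∫ l in Ioi (0:ℝ), Complex.exp (Complex.I * t * l) * ((l ^ p : ℝ) : ℂ) * η l * G (σ * l)‖
      ≤ Cη * CG * σ ^ a * (c₂ ^ (p + a + 1) / (p + a + 1)) := by
  have hint : IntervalIntegrable (fun l => Cη * CG * σ ^ a * l ^ (p + a)) volume 0 c₂ :=
    (intervalIntegral.intervalIntegrable_rpow' (by linarith)).const_mul _
  refine (norm_setIntegral_Ioi_le_of_eq_zero_of_lt hc₂ ?_
    (fun l hl => norm_oscillatory_integrand_le hσ hl.1 hG hηb) hint).trans_eq ?_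
  · intro l hl
    rw [hηs l fun h => hl.not_ge h.2, mul_zero, zero_mul]
  · rw [intervalIntegral.integral_const_mul, ← integral_zero_rpow_sub_one hpa,
      add_sub_cancel_right]

theorem stmt_10_general (n : ℕ) (ε : ℝ) (hε : 0 < ε) (c : ℂ)
    (G : ℝ → ℂ) (CG : ℝ)
    (hG : ∀ z : ℝ, 0 < z → ‖G z‖ ≤ CG * z ^ (((n:ℝ) - 3)/2))
    (η : ℝ → ℂ) (Cη c₂ : ℝ) (hc₂ : 0 < c₂)
    (hηb : ∀ l : ℝ, ‖η l‖ ≤ Cη) (hηs : ∀ l : ℝ, l ∉ Ioc 0 c₂ → η l = 0) :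
    ∃ Cε : ℝ, ∀ σ : ℝ, 1 ≤ σ → ∀ t : ℝ,
      ‖c * ((σ ^ (-((n:ℝ) - 2)) : ℝ) : ℂ) * ∫ l in Ioi (0:ℝ),
          Complex.exp (Complex.I * t * l) * ((l ^ (1 + 2*ε - ((n:ℝ) + 1)/2) : ℝ) : ℂ) *
            η l * G (σ * l)‖
        ≤ Cε * σ ^ (-((n:ℝ) - 1)/2) := by
  have hexp : 1 + 2 * ε - ((n:ℝ) + 1) / 2 + ((n:ℝ) - 3) / 2 + 1 = 2 * ε := by ring
  refine ⟨‖c‖ * (Cη * CG * (c₂ ^ (2 * ε) / (2 * ε))), fun σ hσ t => ?_⟩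
  have hσ0 : 0 < σ := one_pos.trans_le hσ
  have hbound := norm_integral_Ioi_oscillatory_le (t := t) (by rw [hexp]; positivity) hσ0
    hc₂.le hG hηb hηs
  rw [hexp] at hbound
  have hpow : σ ^ (-((n:ℝ) - 2)) * σ ^ (((n:ℝ) - 3) / 2) = σ ^ (-((n:ℝ) - 1) / 2) := by
    rw [← rpow_add hσ0]
    ring_nf
  rw [norm_mul, norm_mul, Complex.norm_real, Real.norm_of_nonneg (rpow_nonneg hσ0.le _), ← hpow]
  calc _ ≤ ‖c‖ * σ ^ (-((n:ℝ) - 2)) *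
        (Cη * CG * σ ^ (((n:ℝ) - 3) / 2) * (c₂ ^ (2 * ε) / (2 * ε))) := by gcongr
    _ = _ := by ring

/-- Estimate (A.9): the extra factor `λ^{2ε}` removes the logarithm:
`|F̃(σ,t)| ≤ C_ε σ^{-(n-1)/2}` uniformly in `σ ≥ 1`, `t`. -/
theorem stmt_10 (n : ℕ) (hn : 3 ≤ n) (ε : ℝ) (hε : 0 < ε) (c : ℂ)
    (G : ℝ → ℂ) (CG : ℝ)
    (hG : ∀ z : ℝ, 0 < z → ‖G z‖ ≤ CG * z ^ (((n:ℝ) - 3)/2))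
    (hG0 : ∀ z : ℝ, |z| ≤ 1 → G z = 0)
    (η : ℝ → ℂ) (Cη c₂ : ℝ) (hc₂ : 0 < c₂)
    (hηb : ∀ l : ℝ, ‖η l‖ ≤ Cη) (hηs : ∀ l : ℝ, l ∉ Ioc 0 c₂ → η l = 0) :
    ∃ Cε : ℝ, ∀ σ : ℝ, 1 ≤ σ → ∀ t : ℝ,
      ‖c * ((σ ^ (-((n:ℝ) - 2)) : ℝ) : ℂ) * ∫ l in Ioi (0:ℝ),
          Complex.exp (Complex.I * t * l) * ((l ^ (1 + 2*ε - ((n:ℝ) + 1)/2) : ℝ) : ℂ) *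
            η l * G (σ * l)‖
        ≤ Cε * σ ^ (-((n:ℝ) - 1)/2) :=
  stmt_10_general n ε hε c G CG hG η Cη c₂ hc₂ hηb hηs
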